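/- arXiv:0910.3591 — 9 statements merged into one kernel-verified Lean document; each statement's English description precedes it below -/
import Mathlib

section
/- Let G be a connected simple graph on a finite vertex set V, let v ∈ V, and let Λ₁, Λ₂ be subsets of N_G(v) with Λ₁ ∪ Λ₂ = N_G(v). Form the simple graph G' on the vertex set Option V (where `some u` keeps the old vertices, `some v` is the first child, and `none` is the new second child) whose edges are: all edges of G not incident to v, an edge from the first child to each vertex of Λ₁, an edge from the second child to each vertex of Λ₂, and an edge between the two children. Then G' is connected. -/
/-- Adjacency specification for the duplication operation: `some u` keeps the old
vertices, `some v` is the first child, `none` is the second child.  The edges are: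
all edges of `G` not incident to `v`, an edge from the first child to each vertex
of `L1`, an edge from the second child to each vertex of `L2`, and (if `link`
holds) an edge between the two children. -/
def dupAdj {V : Type*} (G : SimpleGraph V) (v : V) (L1 L2 : Set V) (link : Prop) :
    Option V → Option V → Prop
  | some a, some b => (a ≠ v ∧ b ≠ v ∧ G.Adj a b) ∨ (a = v ∧ b ∈ L1) ∨ (b = v ∧ a ∈ L1)
  | some a, none => a ∈ L2 ∨ (a = v ∧ link)
  | none, some b => b ∈ L2 ∨ (b = v ∧ link)
  | none, none => False

/-- The graph obtained after the duplication of agent `v`. -/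
def dupGraph {V : Type*} (G : SimpleGraph V) (v : V) (L1 L2 : Set V) (link : Prop) :
    SimpleGraph (Option V) :=
  SimpleGraph.fromRel (dupAdj G v L1 L2 link)


lemma dup_nbr_reach {V : Type*} (G : SimpleGraph V) (v : V) (Λ₁ Λ₂ : Set V)
    (hunion : Λ₁ ∪ Λ₂ = G.neighborSet v) {a : V} (ha : G.Adj a v) :
    (dupGraph G v Λ₁ Λ₂ True).Reachable (some a) (some v) := by
  have hav : a ≠ v := ha.ne
  have hmem : a ∈ Λ₁ ∪ Λ₂ := by
    rw [hunion]; simpa [SimpleGraph.mem_neighborSet] using ha.symm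
  rcases hmem with h | h
  · refine SimpleGraph.Adj.reachable ?_
    rw [dupGraph, SimpleGraph.fromRel_adj]
    exact ⟨by simpa using hav, Or.inl (Or.inr (Or.inr ⟨rfl, h⟩))⟩
  · have e1 : (dupGraph G v Λ₁ Λ₂ True).Adj (some a) none := by
      rw [dupGraph, SimpleGraph.fromRel_adj]
      exact ⟨by simp, Or.inl (Or.inl h)⟩
    have e2 : (dupGraph G v Λ₁ Λ₂ True).Adj none (some v) := by
      rw [dupGraph, SimpleGraph.fromRel_adj]
      exact ⟨by simp, Or.inl (Or.inr ⟨rfl, trivial⟩)⟩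
    exact e1.reachable.trans e2.reachable

lemma dup_walk_reach {V : Type*} (G : SimpleGraph V) (v : V)
    (Λ₁ Λ₂ : Set V) (hunion : Λ₁ ∪ Λ₂ = G.neighborSet v) {u w : V}
    (p : G.Walk u w) : (dupGraph G v Λ₁ Λ₂ True).Reachable (some u) (some w) := by
  induction p with
  | nil => exact SimpleGraph.Reachable.refl _
  | @cons x y _ h _ ih =>
    refine SimpleGraph.Reachable.trans ?_ ih
    by_cases hx : x = v
    · subst hx
      exact (dup_nbr_reach G x Λ₁ Λ₂ hunion h.symm).symm
    · by_cases hy : y = v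
      · subst hy
        exact dup_nbr_reach G y Λ₁ Λ₂ hunion h
      · refine SimpleGraph.Adj.reachable ?_
        rw [dupGraph, SimpleGraph.fromRel_adj]
        exact ⟨by simpa using h.ne, Or.inl (Or.inl ⟨hx, hy, h⟩)⟩

/-- duplication under the first connectivity rule
(`Λ₁ ∪ Λ₂ = N_G(v)` and the two children are linked to each other)
preserves connectivity. -/
theorem duplication_rule_one_preserves_connectivity {V : Type*} [Fintype V]
    (G : SimpleGraph V) (hG : G.Connected) (v : V) (Λ₁ Λ₂ : Set V)
    (h1 : Λ₁ ⊆ G.neighborSet v) (h2 : Λ₂ ⊆ G.neighborSet v)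
    (hunion : Λ₁ ∪ Λ₂ = G.neighborSet v) :
    (dupGraph G v Λ₁ Λ₂ True).Connected := by
  have hlink : (dupGraph G v Λ₁ Λ₂ True).Adj none (some v) := by
    rw [dupGraph, SimpleGraph.fromRel_adj]
    exact ⟨by simp, Or.inl (Or.inr ⟨rfl, trivial⟩)⟩
  have key : ∀ x, (dupGraph G v Λ₁ Λ₂ True).Reachable x (some v) := by
    rintro (_ | u)
    · exact hlink.reachable
    · exact dup_walk_reach G v Λ₁ Λ₂ hunion (hG.preconnected u v).some
  exact SimpleGraph.Connected.mk fun x y => (key x).trans (key y).symm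
end

section
/- Let G be a connected simple graph on a finite vertex set V, let v ∈ V, and let Λ₁, Λ₂ be subsets of N_G(v) with Λ₁ ∪ Λ₂ = N_G(v) and Λ₁ ∩ Λ₂ ≠ ∅. Form the simple graph G' on the vertex set Option V (where `some u` keeps the old vertices, `some v` is the first child, and `none` is the new second child) whose edges are: all edges of G not incident to v, an edge from the first child to each vertex of Λ₁, and an edge from the second child to each vertex of Λ₂ (with no edge between the two children). Then G' is connected. -/
/-- duplication under the second connectivity rule
(`Λ₁ ∪ Λ₂ = N_G(v)`, `Λ₁ ∩ Λ₂ ≠ ∅`, and no edge between the two children)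
preserves connectivity. -/
theorem duplication_rule_two_preserves_connectivity {V : Type*} [Fintype V]
    (G : SimpleGraph V) (hG : G.Connected) (v : V) (Λ₁ Λ₂ : Set V)
    (h1 : Λ₁ ⊆ G.neighborSet v) (h2 : Λ₂ ⊆ G.neighborSet v)
    (hunion : Λ₁ ∪ Λ₂ = G.neighborSet v) (hinter : Λ₁ ∩ Λ₂ ≠ ∅) :
    (dupGraph G v Λ₁ Λ₂ False).Connected := by
  obtain ⟨w, hw1, hw2⟩ := Set.nonempty_iff_ne_empty.2 hinter
  set G' := dupGraph G v Λ₁ Λ₂ False with hG'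
  have hadjvw : G.Adj v w := h1 hw1
  have hwv : w ≠ v := (G.ne_of_adj hadjvw).symm
  have adjG' : ∀ a b : Option V, a ≠ b → dupAdj G v Λ₁ Λ₂ False a b → G'.Adj a b := by
    intro a b hne h
    exact (SimpleGraph.fromRel_adj _ _ _).2 ⟨hne, Or.inl h⟩
  -- basic edges
  have e_wv : G'.Adj (some w) (some v) := by
    apply adjG' _ _ (by simpa using hwv)
    exact Or.inr (Or.inr ⟨rfl, hw1⟩)
  have e_wnone : G'.Adj (some w) none := by
    apply adjG' _ _ (by simp)
    exact Or.inl hw2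
  have key : ∀ a b : V, G.Adj a b → G'.Reachable (some a) (some b) := by
    intro a b hab
    have hne : a ≠ b := G.ne_of_adj hab
    have step : ∀ a : V, a ∈ G.neighborSet v → G'.Reachable (some v) (some a) := by
      intro a ha
      have : a ∈ Λ₁ ∪ Λ₂ := hunion ▸ ha
      have hav : v ≠ a := fun h => G.loopless.irrefl v (h ▸ ha)
      rcases this with h | h
      · exact (adjG' (some v) (some a) (by simpa using hav)
          (Or.inr (Or.inl ⟨rfl, h⟩))).reachable
      · have e1 : G'.Adj (some a) none := adjG' _ _ (by simp) (Or.inl h)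
        exact (e_wv.symm.reachable.trans e_wnone.reachable).trans e1.symm.reachable
    by_cases hav : a = v
    · subst hav
      exact step b hab
    · by_cases hbv : b = v
      · subst hbv
        exact (step a hab.symm).symm
      · exact (adjG' (some a) (some b) (by simpa using hne)
          (Or.inl ⟨hav, hbv, hab⟩)).reachable
  have reach : ∀ a b : V, G'.Reachable (some a) (some b) := by
    intro a b
    obtain ⟨p⟩ := hG.preconnected a b
    induction p with
    | nil => exact SimpleGraph.Reachable.refl _
    | cons h _ ih => exact (key _ _ h).trans ih
  have tov : ∀ x : Option V, G'.Reachable x (some v) := by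
    intro x
    match x with
    | some a => exact reach a v
    | none => exact e_wnone.symm.reachable.trans e_wv.reachable
  constructor
  intro x y
  exact (tov x).trans (tov y).symm
end

section
/- Let n ≥ 1, let x : Fin n → ℕ, let i ≠ j be indices, and let δ be an integer with 1 ≤ δ ≤ min(x i, x j). Let x' be the gossip update of x along (i,j) with step δ, i.e.: if x i = x j then x' = x; if x i > x j then x' i = x i + δ, x' j = x j − δ; if x i < x j then x' i = x i − δ, x' j = x j + δ; and x' k = x k for all k ∉ {i,j}. Then min_k x' k ≤ min_k x k and max_k x' k ≥ max_k x k; in particular, if x is not a constant function then x' is not a constant function. -/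
/-- A gossip update of the state vector `x` into `x'` along the pair `(i, j)`
with step `δ` (with `1 ≤ δ ≤ min (x i) (x j)`): it leaves equal states unchanged,
transfers `δ` units from the smaller state to the larger one, and leaves all
other agents' states unchanged. -/
def GossipStep {n : ℕ} (x x' : Fin n → ℕ) (i j : Fin n) (δ : ℕ) : Prop :=
  i ≠ j ∧ 1 ≤ δ ∧ δ ≤ min (x i) (x j) ∧
  (∀ k, k ≠ i → k ≠ j → x' k = x k) ∧
  ((x i = x j ∧ x' i = x i ∧ x' j = x j) ∨
   (x i > x j ∧ x' i = x i + δ ∧ x' j = x j - δ) ∨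
   (x i < x j ∧ x' i = x i - δ ∧ x' j = x j + δ))

/-- under a gossip update the minimum state cannot increase and the
maximum state cannot decrease; in particular a non-constant state vector stays
non-constant. -/
theorem gossip_min_max (n : ℕ) (hn : 1 ≤ n) (x x' : Fin n → ℕ) (i j : Fin n)
    (δ : ℕ) (hstep : GossipStep x x' i j δ) :
    (⨅ k, x' k) ≤ (⨅ k, x k) ∧ (⨆ k, x k) ≤ (⨆ k, x' k) ∧
      ((¬ ∀ k l, x k = x l) → ¬ ∀ k l, x' k = x' l) := by
  haveI : Nonempty (Fin n) := ⟨⟨0, hn⟩⟩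
  obtain ⟨hij, hδ1, hδ2, hother, hcases⟩ := hstep
  have hbdd : ∀ y : Fin n → ℕ, BddAbove (Set.range y) := fun y => (Set.finite_range y).bddAbove
  have key1 : ∀ k, ∃ m, x' m ≤ x k := by
    intro k
    by_cases hki : k = i
    · subst hki
      rcases hcases with ⟨h, hi, hj⟩ | ⟨h, hi, hj⟩ | ⟨h, hi, hj⟩
      · exact ⟨k, le_of_eq hi⟩
      · exact ⟨j, by omega⟩
      · exact ⟨k, by omega⟩
    · by_cases hkj : k = j
      · subst hkj
        rcases hcases with ⟨h, hi, hj⟩ | ⟨h, hi, hj⟩ | ⟨h, hi, hj⟩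
        · exact ⟨k, le_of_eq hj⟩
        · exact ⟨k, by omega⟩
        · exact ⟨i, by omega⟩
      · exact ⟨k, le_of_eq (hother k hki hkj)⟩
  have key2 : ∀ k, ∃ m, x k ≤ x' m := by
    intro k
    by_cases hki : k = i
    · subst hki
      rcases hcases with ⟨h, hi, hj⟩ | ⟨h, hi, hj⟩ | ⟨h, hi, hj⟩
      · exact ⟨k, le_of_eq hi.symm⟩
      · exact ⟨k, by omega⟩
      · exact ⟨j, by omega⟩
    · by_cases hkj : k = j
      · subst hkj
        rcases hcases with ⟨h, hi, hj⟩ | ⟨h, hi, hj⟩ | ⟨h, hi, hj⟩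
        · exact ⟨k, le_of_eq hj.symm⟩
        · exact ⟨i, by omega⟩
        · exact ⟨k, by omega⟩
      · exact ⟨k, le_of_eq (hother k hki hkj).symm⟩
  obtain ⟨k0, hk0⟩ := Finite.exists_min x
  obtain ⟨k1, hk1⟩ := Finite.exists_max x
  have hmin : (⨅ k, x' k) ≤ (⨅ k, x k) := by
    obtain ⟨m, hm⟩ := key1 k0
    exact le_trans (le_trans (ciInf_le (OrderBot.bddBelow _) m) hm) (le_ciInf hk0)
  have hmax : (⨆ k, x k) ≤ (⨆ k, x' k) := by
    obtain ⟨m, hm⟩ := key2 k1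
    exact le_trans (ciSup_le hk1) (le_trans hm (le_ciSup (hbdd x') m))
  refine ⟨hmin, hmax, ?_⟩
  intro hnc hx'
  apply hnc
  have hconst : (⨆ m, x' m) ≤ (⨅ m, x' m) := by
    apply ciSup_le
    intro m
    exact le_ciInf fun m' => le_of_eq (hx' m m')
  intro k l
  have h1 : x k ≤ ⨆ m, x m := le_ciSup (hbdd x) k
  have h2 : (⨅ m, x m) ≤ x l := ciInf_le (OrderBot.bddBelow _) l
  have h3 : x l ≤ ⨆ m, x m := le_ciSup (hbdd x) l
  have h4 : (⨅ m, x m) ≤ x k := ciInf_le (OrderBot.bddBelow _) k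
  omega
end

section
/- Let n ≥ 1, let x : Fin n → ℕ, let i ≠ j be indices with x i ≠ x j, let δ be an integer with 1 ≤ δ ≤ min(x i, x j), and let x' be the gossip update of x along (i,j) with step δ. Then ∑_k (x' k)² = ∑_k (x k)² + 2δ² + 2δ·|x i − x j|; in particular ∑_k (x' k)² ≥ ∑_k (x k)² + 4. -/
/-- a gossip update along a pair of agents with distinct states
increases the sum of squares of the states by exactly `2δ² + 2δ|x i - x j|`,
hence by at least `4`. -/
theorem gossip_sum_squares (n : ℕ) (hn : 1 ≤ n) (x x' : Fin n → ℕ) (i j : Fin n)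
    (hne : x i ≠ x j) (δ : ℕ) (hstep : GossipStep x x' i j δ) :
    (∑ k, ((x' k : ℤ))^2) =
        (∑ k, ((x k : ℤ))^2) + 2 * (δ : ℤ)^2 + 2 * (δ : ℤ) * |(x i : ℤ) - (x j : ℤ)| ∧
      (∑ k, (x k)^2) + 4 ≤ ∑ k, (x' k)^2 := by
  obtain ⟨hij, hδ1, hδmin, hother, hcase⟩ := hstep
  have hδi : δ ≤ x i := le_trans hδmin (min_le_left _ _)
  have hδj : δ ≤ x j := le_trans hδmin (min_le_right _ _)
  -- sum decomposition
  have hsplit : ∀ f : Fin n → ℤ,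
      ∑ k, f k = f i + f j + ∑ k ∈ ({i, j} : Finset (Fin n))ᶜ, f k := by
    intro f
    rw [← Finset.sum_add_sum_compl ({i, j} : Finset (Fin n)) f, Finset.sum_pair hij]
  have hcomp : ∑ k ∈ ({i, j} : Finset (Fin n))ᶜ, ((x' k : ℤ))^2
      = ∑ k ∈ ({i, j} : Finset (Fin n))ᶜ, ((x k : ℤ))^2 := by
    apply Finset.sum_congr rfl
    intro k hk
    simp only [Finset.mem_compl, Finset.mem_insert, Finset.mem_singleton, not_or] at hk
    rw [hother k hk.1 hk.2]
  have key : (∑ k, ((x' k : ℤ))^2) =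
      (∑ k, ((x k : ℤ))^2) + 2 * (δ : ℤ)^2 + 2 * (δ : ℤ) * |(x i : ℤ) - (x j : ℤ)| := by
    rw [hsplit (fun k => ((x' k : ℤ))^2), hsplit (fun k => ((x k : ℤ))^2), hcomp]
    rcases hcase with ⟨h, _, _⟩ | ⟨h, hi, hj⟩ | ⟨h, hi, hj⟩
    · exact absurd h hne
    · rw [hi, hj]
      have hxij : (x j : ℤ) ≤ x i := by exact_mod_cast le_of_lt h
      rw [abs_of_nonneg (by linarith)]
      push_cast [hδj]
      ring
    · rw [hi, hj]
      have hxij : (x i : ℤ) ≤ x j := by exact_mod_cast le_of_lt h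
      rw [abs_of_nonpos (by linarith)]
      push_cast [hδi]
      ring
  refine ⟨key, ?_⟩
  have habs : (1 : ℤ) ≤ |(x i : ℤ) - (x j : ℤ)| := by
    have : ((x i : ℤ)) ≠ (x j : ℤ) := by exact_mod_cast hne
    have h0 : (0 : ℤ) < |(x i : ℤ) - (x j : ℤ)| := abs_pos.mpr (sub_ne_zero.mpr this)
    omega
  have hδ1' : (1 : ℤ) ≤ (δ : ℤ) := by exact_mod_cast hδ1
  have : (∑ k, ((x k : ℤ))^2) + 4 ≤ ∑ k, ((x' k : ℤ))^2 := by
    rw [key]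
    nlinarith
  have h2 : ((∑ k, (x k)^2 : ℕ) : ℤ) + 4 ≤ ((∑ k, (x' k)^2 : ℕ) : ℤ) := by
    push_cast
    exact this
  exact_mod_cast h2
end

section
/- Let n ≥ 1 and B ≥ 1 be integers and let x : ℕ → (Fin n → ℕ) be a sequence such that for every r, x(r+1) is obtained from x(r) by a gossip update along some pair (i_r, j_r) with some step δ_r satisfying 1 ≤ δ_r ≤ min(x(r) i_r, x(r) j_r), and such that x(r) k ≤ B for all r and k. Then for every m, the number of indices r < m with x(r+1) ≠ x(r) is at most n·B²/4. -/
lemma gossip_sum_split {n : ℕ} (f : Fin n → ℕ) (i j : Fin n) (hij : i ≠ j) :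
    ∑ k, f k = f i + f j + ∑ k ∈ (Finset.univ.erase i).erase j, f k := by
  rw [← Finset.add_sum_erase _ f (Finset.mem_univ i),
      ← Finset.add_sum_erase _ f (Finset.mem_erase.mpr ⟨hij.symm, Finset.mem_univ j⟩)]
  ring

lemma gossip_step_phi {n : ℕ} (x x' : Fin n → ℕ) (i j : Fin n) (δ : ℕ)
    (h : GossipStep x x' i j δ) :
    (∑ k, (x k)^2 ≤ ∑ k, (x' k)^2) ∧
    (x' ≠ x → ∑ k, (x k)^2 + 4 ≤ ∑ k, (x' k)^2) := by
  obtain ⟨hij, hδ1, hδ2, hoff, hcases⟩ := h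
  have hδi : δ ≤ x i := le_trans hδ2 (min_le_left _ _)
  have hδj : δ ≤ x j := le_trans hδ2 (min_le_right _ _)
  have hsum : ∑ k ∈ (Finset.univ.erase i).erase j, (x' k)^2
      = ∑ k ∈ (Finset.univ.erase i).erase j, (x k)^2 := by
    refine Finset.sum_congr rfl fun k hk => ?_
    rw [Finset.mem_erase, Finset.mem_erase] at hk
    rw [hoff k hk.2.1 hk.1]
  rw [gossip_sum_split (fun k => (x' k)^2) i j hij,
      gossip_sum_split (fun k => (x k)^2) i j hij]
  simp only [hsum]
  rcases hcases with ⟨he, hi, hj⟩ | ⟨hgt, hi, hj⟩ | ⟨hlt, hi, hj⟩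
  · have hxx : x' = x := by
      funext k
      by_cases hki : k = i
      · rw [hki, hi]
      · by_cases hkj : k = j
        · rw [hkj, hj]
        · exact hoff k hki hkj
    refine ⟨by simp [hi, hj], fun hne => absurd hxx hne⟩
  · obtain ⟨c, hc⟩ := Nat.le.dest hδj
    have hxj : x j - δ = c := by omega
    rw [hi, hj, hxj]
    have hac : x i ≥ c + δ + 1 := by omega
    constructor
    · nlinarith
    · intro _; nlinarith
  · obtain ⟨c, hc⟩ := Nat.le.dest hδi
    have hxi : x i - δ = c := by omega
    rw [hi, hj, hxi]
    have hac : x j ≥ c + δ + 1 := by omega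
    constructor
    · nlinarith
    · intro _; nlinarith

/-- along a sequence of gossip updates with all states bounded by
`B`, at most `n * B² / 4` of the updates can actually change the state vector. -/
theorem gossip_finitely_many_nontrivial_updates (n B : ℕ) (hn : 1 ≤ n) (hB : 1 ≤ B)
    (x : ℕ → Fin n → ℕ)
    (hstep : ∀ r, ∃ i j δ, GossipStep (x r) (x (r + 1)) i j δ)
    (hbound : ∀ r k, x r k ≤ B) (m : ℕ) :
    ((Finset.range m).filter fun r => x (r + 1) ≠ x r).card ≤ n * B ^ 2 / 4 := by
  set Φ : ℕ → ℕ := fun r => ∑ k, (x r k)^2 with hΦ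
  have hkey : ∀ r, (Φ r ≤ Φ (r + 1)) ∧ (x (r + 1) ≠ x r → Φ r + 4 ≤ Φ (r + 1)) := by
    intro r
    obtain ⟨i, j, δ, h⟩ := hstep r
    exact gossip_step_phi (x r) (x (r + 1)) i j δ h
  have hmain : ∀ m, Φ 0 + 4 * ((Finset.range m).filter fun r => x (r + 1) ≠ x r).card ≤ Φ m := by
    intro m
    induction m with
    | zero => simp
    | succ m ih =>
      rw [Finset.range_add_one, Finset.filter_insert]
      by_cases hne : x (m + 1) ≠ x m
      · rw [if_pos hne, Finset.card_insert_of_notMem (by simp)]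
        have := (hkey m).2 hne
        omega
      · rw [if_neg hne]
        have := (hkey m).1
        omega
  have hbd : Φ m ≤ n * B ^ 2 := by
    calc Φ m ≤ ∑ _k : Fin n, B ^ 2 :=
          Finset.sum_le_sum fun k _ => Nat.pow_le_pow_left (hbound m k) 2
      _ = n * B ^ 2 := by simp [Finset.sum_const, mul_comm]
  have := hmain m
  omega
end

section
/- Let n ≥ 1, B ≥ 1, T ≥ 1 be integers, let G be a connected simple graph on Fin n, and let x : ℕ → (Fin n → ℕ) be a sequence such that: for every r, x(r+1) is obtained from x(r) by a gossip update along some edge e(r) of G with some step δ_r satisfying 1 ≤ δ_r ≤ min of the two endpoint states; within every window of T consecutive times every edge of G is selected at least once; and for every r and every agent i, 0 < x(r) i < B. Then x(0) is a constant function (the agents are at consensus from the start). -/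
lemma gossip_step_sq (a b δ : ℕ) (h1 : 1 ≤ δ) (hb : δ ≤ b) (hab : b < a) :
    a ^ 2 + b ^ 2 < (a + δ) ^ 2 + (b - δ) ^ 2 := by
  zify [hb]
  nlinarith

/-- Theorem 3, contrapositive form: if the agents' states evolve
by gossip updates along edges of a connected graph `G`, within every window of
`T` consecutive times every edge of `G` is selected at least once, and no
critical event ever occurs (every state stays strictly between `0` and `B`),
then the agents are at consensus from the start. -/
theorem no_critical_event_implies_consensus (n B T : ℕ) (hn : 1 ≤ n) (hB : 1 ≤ B)
    (hT : 1 ≤ T) (G : SimpleGraph (Fin n)) (hG : G.Connected)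
    (x : ℕ → Fin n → ℕ) (e : ℕ → Fin n × Fin n)
    (hadj : ∀ r, G.Adj (e r).1 (e r).2)
    (hstep : ∀ r, ∃ δ, GossipStep (x r) (x (r + 1)) (e r).1 (e r).2 δ)
    (hwin : ∀ s, ∀ a b : Fin n, G.Adj a b →
      ∃ r, s ≤ r ∧ r < s + T ∧ (e r = (a, b) ∨ e r = (b, a)))
    (hbound : ∀ r i, 0 < x r i ∧ x r i < B) :
    ∀ k l, x 0 k = x 0 l := by
  classical
  set Φ : ℕ → ℕ := fun r => ∑ i, (x r i) ^ 2 with hΦdef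
  -- per-step analysis
  have key : ∀ r, Φ r ≤ Φ (r + 1) ∧
      (Φ (r + 1) ≤ Φ r → x (r + 1) = x r ∧ x r (e r).1 = x r (e r).2) := by
    intro r
    obtain ⟨δ, hne, hδ1, hδm, hoth, hcases⟩ := hstep r
    set i := (e r).1 with hi'
    set j := (e r).2 with hj'
    have hsplit : ∀ y : Fin n → ℕ,
        ∑ k, (y k) ^ 2 = (∑ k ∈ ({i, j} : Finset (Fin n))ᶜ, (y k) ^ 2)
          + ((y i) ^ 2 + (y j) ^ 2) := by
      intro y
      rw [← Finset.sum_compl_add_sum ({i, j} : Finset (Fin n)), Finset.sum_pair hne]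
    have hcompl : ∑ k ∈ ({i, j} : Finset (Fin n))ᶜ, (x (r + 1) k) ^ 2
        = ∑ k ∈ ({i, j} : Finset (Fin n))ᶜ, (x r k) ^ 2 := by
      apply Finset.sum_congr rfl
      intro k hk
      simp only [Finset.mem_compl, Finset.mem_insert, Finset.mem_singleton, not_or] at hk
      rw [hoth k hk.1 hk.2]
    have hΦr : Φ r = (∑ k ∈ ({i, j} : Finset (Fin n))ᶜ, (x r k) ^ 2)
        + ((x r i) ^ 2 + (x r j) ^ 2) := hsplit (x r)
    have hΦr1 : Φ (r + 1) = (∑ k ∈ ({i, j} : Finset (Fin n))ᶜ, (x r k) ^ 2)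
        + ((x (r + 1) i) ^ 2 + (x (r + 1) j) ^ 2) :=
      (hsplit (x (r + 1))).trans (by rw [hcompl])
    rcases hcases with ⟨heq, hi, hj⟩ | ⟨hgt, hi, hj⟩ | ⟨hlt, hi, hj⟩
    · have hxx : x (r + 1) = x r := by
        funext k
        by_cases hki : k = i
        · rw [hki, hi]
        · by_cases hkj : k = j
          · rw [hkj, hj]
          · exact hoth k hki hkj
      refine ⟨le_of_eq ?_, fun _ => ⟨hxx, heq⟩⟩
      simp only [hΦdef]
      rw [hxx]
    · have hlt' : Φ r < Φ (r + 1) := by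
        rw [hΦr, hΦr1, hi, hj]
        have := gossip_step_sq (x r i) (x r j) δ hδ1 (le_trans hδm (min_le_right _ _)) hgt
        omega
      exact ⟨le_of_lt hlt', fun h => absurd h (by omega)⟩
    · have hlt' : Φ r < Φ (r + 1) := by
        rw [hΦr, hΦr1, hi, hj]
        have := gossip_step_sq (x r j) (x r i) δ hδ1 (le_trans hδm (min_le_left _ _)) hlt
        omega
      exact ⟨le_of_lt hlt', fun h => absurd h (by omega)⟩
  have hmono : Monotone Φ := monotone_nat_of_le_succ fun r => (key r).1
  -- boundedness
  have hbΦ : ∀ r, Φ r ≤ n * B ^ 2 := by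
    intro r
    calc Φ r ≤ ∑ _i : Fin n, B ^ 2 := by
          apply Finset.sum_le_sum
          intro i _
          exact Nat.pow_le_pow_left (le_of_lt (hbound r i).2) 2
      _ = n * B ^ 2 := by simp [Finset.sum_const, mul_comm]
  -- eventual constancy of Φ
  set g : ℕ → ℕ := fun r => n * B ^ 2 - Φ r with hgdef
  obtain ⟨R, hR⟩ : ∃ R, g R = sInf (Set.range g) := by
    have := Nat.sInf_mem (Set.range_nonempty g)
    exact this.imp fun R h => h
  have hΦconst : ∀ r, R ≤ r → Φ r = Φ R := by
    intro r hr
    have h1 : g r ≤ g R := by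
      have := hmono hr
      simp only [hgdef]
      omega
    have h2 : g R ≤ g r := hR ▸ Nat.sInf_le ⟨r, rfl⟩
    have := hbΦ r
    have := hbΦ R
    simp only [hgdef] at h1 h2
    omega
  -- states constant after R
  have hconst_after : ∀ r, R ≤ r → x r = x R := by
    intro r hr
    induction r, hr using Nat.le_induction with
    | base => rfl
    | succ r hr ih =>
      have h := (key r).2 (by rw [hΦconst r hr, hΦconst (r + 1) (by omega)])
      rw [h.1, ih]
  -- adjacent agents equal at time R
  have hedge : ∀ a b : Fin n, G.Adj a b → x R a = x R b := by
    intro a b hab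
    obtain ⟨r, hr1, _, hr3⟩ := hwin R a b hab
    have h := (key r).2 (by rw [hΦconst r hr1, hΦconst (r + 1) (by omega)])
    have h2 := h.2
    rw [hconst_after r hr1] at h2
    rcases hr3 with he | he <;> rw [he] at h2
    · exact h2
    · exact h2.symm
  -- consensus at R via connectivity
  have hcR : ∀ k l, x R k = x R l := by
    intro k l
    obtain ⟨w⟩ := hG k l
    induction w with
    | nil => rfl
    | cons h p ih => exact (hedge _ _ h).trans ih
  -- backward step
  have hback : ∀ r, (∀ k l, x (r + 1) k = x (r + 1) l) → ∀ k l, x r k = x r l := by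
    intro r hc
    obtain ⟨δ, hne, hδ1, hδm, hoth, hcases⟩ := hstep r
    set i := (e r).1
    set j := (e r).2
    rcases hcases with ⟨heq, hi, hj⟩ | ⟨hgt, hi, hj⟩ | ⟨hlt, hi, hj⟩
    · have hxx : ∀ k, x r k = x (r + 1) k := by
        intro k
        by_cases hki : k = i
        · rw [hki, hi]
        · by_cases hkj : k = j
          · rw [hkj, hj]
          · exact (hoth k hki hkj).symm
      intro k l
      rw [hxx k, hxx l]
      exact hc k l
    · exfalso
      have := hc i j
      have hmj : δ ≤ x r j := le_trans hδm (min_le_right _ _)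
      omega
    · exfalso
      have := hc i j
      have hmi : δ ≤ x r i := le_trans hδm (min_le_left _ _)
      omega
  -- descend from R to 0
  have hdown : ∀ d, ∀ k l, x (R - d) k = x (R - d) l := by
    intro d
    induction d with
    | zero => simpa using hcR
    | succ d ih =>
      rcases Nat.lt_or_ge d R with h | h
      · have h2 : R - (d + 1) + 1 = R - d := by omega
        exact hback _ (by rw [h2]; exact ih)
      · have h2 : R - (d + 1) = R - d := by omega
        rw [h2]
        exact ih
  have := hdown R
  simpa using this
end

section
/- Let G be a connected simple graph on a finite vertex set V in which every vertex has degree 2 (a hole network), let v ∈ V, and let a, b be the two distinct neighbors of v. Form the simple graph G' on Option V (where `some u` keeps the old vertices, `some v` is the first child, and `none` is the second child) whose edges are: all edges of G not incident to v, an edge from the first child to a, an edge from the second child to b, and an edge between the two children. Then G' is connected and every vertex of G' has degree 2. -/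
/-- hole networks (connected, all degrees two) are invariant under
the duplication rule which gives neighbor `a` to the first child, neighbor `b`
to the second child, and connects the two children. -/
theorem hole_invariant_under_duplication {V : Type*} [Fintype V]
    (G : SimpleGraph V) (hG : G.Connected)
    (hdeg : ∀ u, (G.neighborSet u).ncard = 2)
    (v a b : V) (hab : a ≠ b) (hnb : G.neighborSet v = {a, b}) :
    (dupGraph G v {a} {b} True).Connected ∧
      ∀ u, ((dupGraph G v {a} {b} True).neighborSet u).ncard = 2 := by
  classical
  have ha : G.Adj v a := by
    have : a ∈ G.neighborSet v := by rw [hnb]; left; rfl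
    exact this
  have hb : G.Adj v b := by
    have : b ∈ G.neighborSet v := by rw [hnb]; right; rfl
    exact this
  have hva : v ≠ a := ha.ne
  have hvb : v ≠ b := hb.ne
  set G' := dupGraph G v {a} {b} True with hG'def
  -- adjacency characterizations
  have adjSS : ∀ u w : V, G'.Adj (some u) (some w) ↔
      ((u ≠ v ∧ w ≠ v ∧ G.Adj u w) ∨ (u = v ∧ w = a) ∨ (w = v ∧ u = a)) := by
    intro u w
    simp only [hG'def, dupGraph, SimpleGraph.fromRel_adj, dupAdj, Set.mem_singleton_iff,
      ne_eq, Option.some.injEq]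
    constructor
    · rintro ⟨hne, h | h⟩
      · rcases h with ⟨h1, h2, h3⟩ | ⟨h1, h2⟩ | ⟨h1, h2⟩ <;> tauto
      · rcases h with ⟨h1, h2, h3⟩ | ⟨h1, h2⟩ | ⟨h1, h2⟩
        · exact Or.inl ⟨h2, h1, h3.symm⟩
        · exact Or.inr (Or.inr ⟨h1, h2⟩)
        · exact Or.inr (Or.inl ⟨h1, h2⟩)
    · intro h
      have hne : u ≠ w := by
        rcases h with ⟨_, _, h3⟩ | ⟨h1, h2⟩ | ⟨h1, h2⟩
        · exact h3.ne
        · rw [h1, h2]; exact hva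
        · rw [h1, h2]; exact hva.symm
      exact ⟨hne, Or.inl h⟩
  have adjSN : ∀ u : V, G'.Adj (some u) none ↔ (u = b ∨ u = v) := by
    intro u
    simp only [hG'def, dupGraph, SimpleGraph.fromRel_adj, dupAdj, Set.mem_singleton_iff,
      ne_eq, and_true]
    tauto
  have adjNS : ∀ w : V, G'.Adj none (some w) ↔ (w = b ∨ w = v) := by
    intro w
    rw [G'.adj_comm]
    exact adjSN w
  -- neighbor sets
  have nsV : G'.neighborSet (some v) = {some a, none} := by
    ext x
    cases x with
    | none =>
        simp only [SimpleGraph.mem_neighborSet, adjSN, Set.mem_insert_iff,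
          Set.mem_singleton_iff]
        tauto
    | some w =>
        simp only [SimpleGraph.mem_neighborSet, adjSS, Set.mem_insert_iff,
          Set.mem_singleton_iff, Option.some.injEq]
        constructor
        · rintro (⟨h1, _, _⟩ | ⟨h1, h2⟩ | ⟨h1, h2⟩)
          · exact absurd rfl h1
          · exact Or.inl h2
          · exact absurd h2 hva
        · rintro (h | h)
          · exact Or.inr (Or.inl ⟨trivial, h⟩)
          · exact absurd h (Option.some_ne_none w)
  have nsN : G'.neighborSet (none : Option V) = {some b, some v} := by
    ext x
    cases x with
    | none => simp [SimpleGraph.mem_neighborSet]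
    | some w =>
        simp only [SimpleGraph.mem_neighborSet, adjNS, Set.mem_insert_iff,
          Set.mem_singleton_iff, Option.some.injEq]
  have nsGen : ∀ u : V, u ≠ v → u ≠ b →
      G'.neighborSet (some u) = some '' G.neighborSet u := by
    intro u huv hub
    ext x
    cases x with
    | none =>
        simp only [SimpleGraph.mem_neighborSet, adjSN]
        constructor
        · rintro (h | h)
          · exact absurd h hub
          · exact absurd h huv
        · rintro ⟨w, _, h⟩; exact absurd h (by simp)
    | some w =>
        simp only [SimpleGraph.mem_neighborSet, adjSS, Set.mem_image,
          Option.some.injEq]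
        constructor
        · rintro (⟨_, _, h3⟩ | ⟨h1, _⟩ | ⟨h1, h2⟩)
          · exact ⟨w, h3, rfl⟩
          · exact absurd h1 huv
          · exact ⟨w, by rw [h1, h2]; exact ha.symm, rfl⟩
        · rintro ⟨w', hw', rfl⟩
          by_cases hwv : w' = v
          · rw [hwv] at hw'
            have h2 : u ∈ G.neighborSet v := hw'.symm
            rw [hnb] at h2
            rcases h2 with h | h
            · exact Or.inr (Or.inr ⟨hwv, h⟩)
            · exact absurd h hub
          · exact Or.inl ⟨huv, hwv, hw'⟩
  have nsB : G'.neighborSet (some b) =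
      insert none (some '' (G.neighborSet b \ {v})) := by
    ext x
    cases x with
    | none => simp [SimpleGraph.mem_neighborSet, adjSN]
    | some w =>
        simp only [SimpleGraph.mem_neighborSet, adjSS, Set.mem_insert_iff,
          Set.mem_image, Set.mem_diff, Set.mem_singleton_iff, Option.some.injEq]
        constructor
        · rintro (⟨h1, h2, h3⟩ | ⟨h1, _⟩ | ⟨h1, h2⟩)
          · exact Or.inr ⟨w, ⟨h3, h2⟩, rfl⟩
          · exact absurd h1.symm hvb
          · exact absurd h2 (fun h => hab h.symm)
        · rintro (h | ⟨w', ⟨hw1, hw2⟩, hw3⟩)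
          · exact absurd h (by simp)
          · cases hw3
            exact Or.inl ⟨fun h => hvb h.symm, hw2, hw1⟩
  -- degree counts
  have hdeg' : ∀ u, ((G'.neighborSet u).ncard = 2) := by
    intro x
    cases x with
    | none =>
        rw [nsN]
        exact Set.ncard_pair (by simpa using (Ne.symm hvb))
    | some u =>
        by_cases huv : u = v
        · rw [huv, nsV]
          exact Set.ncard_pair (by simp)
        · by_cases hub : u = b
          · rw [hub, nsB]
            have hvmem : v ∈ G.neighborSet b := hb.symm
            have h1 : (G.neighborSet b \ {v}).ncard = 1 := by
              rw [Set.ncard_diff_singleton_of_mem hvmem, hdeg b]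
            rw [Set.ncard_insert_of_notMem (by simp)]
            rw [Set.ncard_image_of_injective _ (Option.some_injective V), h1]
          · rw [nsGen u huv hub,
              Set.ncard_image_of_injective _ (Option.some_injective V), hdeg u]
  -- connectivity
  have step : ∀ x y : V, G.Adj x y → G'.Reachable (some x) (some y) := by
    intro x y hxy
    by_cases hxv : x = v
    · rw [hxv] at hxy ⊢
      have h2 : y ∈ G.neighborSet v := hxy
      rw [hnb] at h2
      rcases h2 with h | h
      · rw [h]
        exact ((adjSS v a).mpr (Or.inr (Or.inl ⟨rfl, rfl⟩))).reachable
      · rw [h]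
        exact ((adjSN v).mpr (Or.inr rfl)).reachable.trans
          ((adjNS b).mpr (Or.inl rfl)).reachable
    · by_cases hyv : y = v
      · rw [hyv] at hxy ⊢
        have h2 : x ∈ G.neighborSet v := hxy.symm
        rw [hnb] at h2
        rcases h2 with h | h
        · rw [h]
          exact ((adjSS a v).mpr (Or.inr (Or.inr ⟨rfl, rfl⟩))).reachable
        · rw [h]
          exact (((adjSN b).mpr (Or.inl rfl)).reachable.trans
            ((adjNS v).mpr (Or.inr rfl)).reachable)
      · exact ((adjSS x y).mpr (Or.inl ⟨hxv, hyv, hxy⟩)).reachable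
  have lift : ∀ x y : V, G.Reachable x y → G'.Reachable (some x) (some y) := by
    intro x y hxy
    obtain ⟨p⟩ := hxy
    induction p with
    | nil => exact SimpleGraph.Reachable.refl _
    | cons h p ih => exact (step _ _ h).trans ih
  refine ⟨⟨fun x y => ?_⟩, hdeg'⟩
  have toV : ∀ x : Option V, G'.Reachable x (some v) := by
    intro x
    cases x with
    | none => exact ((adjNS v).mpr (Or.inr rfl)).reachable
    | some u => exact lift u v (hG.preconnected u v)
  exact (toV x).trans (toV y).symm
end

section
/- Let G be a connected simple graph on a finite vertex set V with |V| ≥ 2 that is a chain network: exactly two vertices have degree 1 and all other vertices have degree 2. Let v ∈ V and form G' on Option V (where `some u` keeps the old vertices, `some v` is the first child, and `none` is the second child) as follows. If v has degree 2 with neighbors a ≠ b, the edges of G' are: all edges of G not incident to v, an edge from the first child to a, an edge from the second child to b, and an edge between the two children. If v has degree 1 with neighbor a, the edges of G' are: all edges of G not incident to v, an edge from the second child to a, and an edge between the two children. In both cases G' is connected, exactly two vertices of G' have degree 1, and all other vertices of G' have degree 2. -/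
lemma dupGraph_adj {V : Type*} (G : SimpleGraph V) (v : V) (L1 L2 : Set V) (link : Prop)
    (x y : Option V) :
    (dupGraph G v L1 L2 link).Adj x y ↔
      x ≠ y ∧ (dupAdj G v L1 L2 link x y ∨ dupAdj G v L1 L2 link y x) :=
  SimpleGraph.fromRel_adj _ _ _

lemma reach_lift {V : Type*} {G : SimpleGraph V} {G' : SimpleGraph (Option V)}
    (h : ∀ u w, G.Adj u w → G'.Reachable (some u) (some w)) {u w : V}
    (hr : G.Reachable u w) : G'.Reachable (some u) (some w) := by
  obtain ⟨p⟩ := hr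
  induction p with
  | nil => exact SimpleGraph.Reachable.refl _
  | cons h' p ih => exact (h _ _ h').trans ih

/-- chain networks (connected, exactly two vertices of degree one,
all other vertices of degree two) are invariant under the duplication rule which
divides the parent's connections between the two children and connects the two
children.  If the parent `v` has the two neighbors `a ≠ b`, the first child gets
`a` and the second gets `b`; if `v` has the single neighbor `a`, the second
child gets `a` and the first child is only linked to its sibling. -/
theorem chain_invariant_under_duplication {V : Type*} [Fintype V]
    (G : SimpleGraph V) (hG : G.Connected) (hcard : 2 ≤ Fintype.card V)
    (hdeg : ∀ u, (G.neighborSet u).ncard = 1 ∨ (G.neighborSet u).ncard = 2)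
    (hends : {u : V | (G.neighborSet u).ncard = 1}.ncard = 2)
    (v : V) (G' : SimpleGraph (Option V))
    (hdef : (∃ a b : V, a ≠ b ∧ G.neighborSet v = {a, b} ∧
              G' = dupGraph G v {a} {b} True) ∨
            (∃ a : V, G.neighborSet v = {a} ∧ G' = dupGraph G v ∅ {a} True)) :
    G'.Connected ∧ {w : Option V | (G'.neighborSet w).ncard = 1}.ncard = 2 ∧
      ∀ w, (G'.neighborSet w).ncard = 1 ∨ (G'.neighborSet w).ncard = 2 := by
  classical
  rcases hdef with ⟨a, b, hab, hN, rfl⟩ | ⟨a, hN, rfl⟩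
  · -- degree 2 case
    have hva : G.Adj v a := by rw [← SimpleGraph.mem_neighborSet, hN]; left; rfl
    have hvb : G.Adj v b := by rw [← SimpleGraph.mem_neighborSet, hN]; right; rfl
    have hav : a ≠ v := fun h => G.irrefl (h ▸ hva)
    have hbv : b ≠ v := fun h => G.irrefl (h ▸ hvb)
    set G' := dupGraph G v {a} {b} True with hG'
    -- neighbor sets
    have hnone : G'.neighborSet none = {some b, some v} := by
      ext x
      cases x with
      | none => simp [hG', dupGraph_adj, dupAdj]
      | some u => simp [hG', dupGraph_adj, dupAdj, or_comm]
    have hsv : G'.neighborSet (some v) = {some a, none} := by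
      ext x
      cases x with
      | none => simp [hG', dupGraph_adj, dupAdj]
      | some u =>
        simp only [hG', SimpleGraph.mem_neighborSet, dupGraph_adj, dupAdj,
          Set.mem_singleton_iff, Set.mem_insert_iff, Set.mem_setOf_eq]
        constructor
        · rintro ⟨hne, h | h⟩ <;>
            rcases h with ⟨h1, h2, h3⟩ | ⟨h1, h2⟩ | ⟨h1, h2⟩ <;> simp_all
        · rintro (h | h)
          · rw [Option.some_inj] at h; subst h
            exact ⟨by simpa [eq_comm] using hav.symm, by tauto⟩
          · simp at h
    have hkey : ∀ u : V, u ≠ v →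
        (G'.neighborSet (some u)).ncard = (G.neighborSet u).ncard := by
      intro u huv
      by_cases hua : u = a
      · subst hua
        have : G'.neighborSet (some u) = some '' G.neighborSet u := by
          ext x
          cases x with
          | none => simp [hG', dupGraph_adj, dupAdj, huv, hab]
          | some w =>
            simp only [hG', SimpleGraph.mem_neighborSet, dupGraph_adj, dupAdj, Set.mem_image,
              Set.mem_singleton_iff, Option.some.injEq, exists_eq_right]
            constructor
            · rintro ⟨hne, h | h⟩ <;>
                rcases h with ⟨h1, h2, h3⟩ | ⟨h1, h2⟩ | ⟨h1, h2⟩ <;>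
                  simp_all [G.adj_symm, hva.symm]
            · intro h
              by_cases hwv : w = v
              · subst hwv
                exact ⟨by simpa [eq_comm] using huv, by tauto⟩
              · exact ⟨by simpa using (G.ne_of_adj h), Or.inl (Or.inl ⟨huv, hwv, h⟩)⟩
        rw [this, Set.ncard_image_of_injective _ (Option.some_injective V)]
      by_cases hub : u = b
      · subst hub
        have heq : G'.neighborSet (some u) =
            insert none (some '' (G.neighborSet u \ {v})) := by
          ext x
          cases x with
          | none => simp [hG', dupGraph_adj, dupAdj]
          | some w =>
            simp only [hG', SimpleGraph.mem_neighborSet, dupGraph_adj, dupAdj, Set.mem_insert_iff,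
              Set.mem_image, Set.mem_diff, Set.mem_singleton_iff, Option.some.injEq,
              exists_eq_right, reduceCtorEq, false_or]
            constructor
            · rintro ⟨hne, h | h⟩ <;>
                rcases h with ⟨h1, h2, h3⟩ | ⟨h1, h2⟩ | ⟨h1, h2⟩ <;> simp_all [G.adj_symm]
            · rintro ⟨h, hwv⟩
              exact ⟨by simpa using (G.ne_of_adj h), Or.inl (Or.inl ⟨huv, hwv, h⟩)⟩
        have hvmem : v ∈ G.neighborSet u := G.adj_symm hvb
        rw [heq, Set.ncard_insert_of_notMem (by simp),
          Set.ncard_image_of_injective _ (Option.some_injective V),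
          Set.ncard_diff_singleton_add_one hvmem]
      · have hvnu : v ∉ G.neighborSet u := by
          intro h
          have : u ∈ G.neighborSet v := G.adj_symm h
          rw [hN] at this
          rcases this with h | h <;> simp_all
        have : G'.neighborSet (some u) = some '' G.neighborSet u := by
          ext x
          cases x with
          | none => simp [hG', dupGraph_adj, dupAdj, huv, hub]
          | some w =>
            simp only [hG', SimpleGraph.mem_neighborSet, dupGraph_adj, dupAdj, Set.mem_image,
              Set.mem_singleton_iff, Option.some.injEq, exists_eq_right]
            constructor
            · rintro ⟨hne, h | h⟩ <;>
                rcases h with ⟨h1, h2, h3⟩ | ⟨h1, h2⟩ | ⟨h1, h2⟩ <;>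
                  simp_all [G.adj_symm]
            · intro h
              have hwv : w ≠ v := by rintro rfl; exact hvnu h
              exact ⟨by simpa using (G.ne_of_adj h), Or.inl (Or.inl ⟨huv, hwv, h⟩)⟩
        rw [this, Set.ncard_image_of_injective _ (Option.some_injective V)]
    have hdegv : (G.neighborSet v).ncard = 2 := by
      rw [hN, Set.ncard_pair hab]
    have hdnone : (G'.neighborSet none).ncard = 2 := by
      rw [hnone, Set.ncard_pair (by simp [hbv])]
    have hdsv : (G'.neighborSet (some v)).ncard = 2 := by
      rw [hsv, Set.ncard_pair (by simp)]
    refine ⟨?_, ?_, ?_⟩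
    · -- connectivity
      have hadjva : G'.Adj (some v) (some a) := by
        rw [hG', dupGraph_adj]
        exact ⟨by simp [hav.symm], Or.inl (Or.inr (Or.inl ⟨rfl, rfl⟩))⟩
      have hadjvn : G'.Adj (some v) none := by
        rw [hG', dupGraph_adj]
        exact ⟨by simp, Or.inl (Or.inr ⟨rfl, trivial⟩)⟩
      have hadjnb : G'.Adj none (some b) := by
        rw [hG', dupGraph_adj]
        exact ⟨by simp, Or.inl (Or.inl rfl)⟩
      have hlift : ∀ u w, G.Adj u w → G'.Reachable (some u) (some w) := by
        have base : ∀ w, G.Adj v w → G'.Reachable (some v) (some w) := by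
          intro w hw
          have : w ∈ G.neighborSet v := hw
          rw [hN] at this
          rcases this with h | h
          · subst h; exact hadjva.reachable
          · simp only [Set.mem_singleton_iff] at h
            subst h
            exact hadjvn.reachable.trans hadjnb.reachable
        intro u w huw
        by_cases huv : u = v
        · subst huv; exact base w huw
        by_cases hwv : w = v
        · subst hwv; exact (base u huw.symm).symm
        · refine SimpleGraph.Adj.reachable ?_
          rw [hG', dupGraph_adj]
          exact ⟨by simpa using (G.ne_of_adj huw), Or.inl (Or.inl ⟨huv, hwv, huw⟩)⟩
      have key : ∀ x : Option V, G'.Reachable x (some v) := by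
        intro x
        cases x with
        | none => exact hadjvn.reachable.symm
        | some u => exact reach_lift hlift (hG.preconnected u v)
      have : Nonempty (Option V) := ⟨none⟩
      exact SimpleGraph.Connected.mk (fun x y => (key x).trans (key y).symm)
    · -- two ends
      have : {w : Option V | (G'.neighborSet w).ncard = 1} =
          some '' {u : V | (G.neighborSet u).ncard = 1} := by
        ext w
        cases w with
        | none =>
          simp only [Set.mem_setOf_eq, hdnone]
          simp
        | some u =>
          simp only [Set.mem_setOf_eq, Set.mem_image, Option.some.injEq, exists_eq_right]
          by_cases huv : u = v
          · subst huv; simp [hdsv, hdegv]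
          · rw [hkey u huv]
      rw [this, Set.ncard_image_of_injective _ (Option.some_injective V), hends]
    · intro w
      cases w with
      | none => exact Or.inr hdnone
      | some u =>
        by_cases huv : u = v
        · subst huv; exact Or.inr hdsv
        · rw [hkey u huv]; exact hdeg u
  · -- degree 1 case
    have hva : G.Adj v a := by rw [← SimpleGraph.mem_neighborSet, hN]; rfl
    have hav : a ≠ v := fun h => G.irrefl (h ▸ hva)
    set G' := dupGraph G v ∅ {a} True with hG'
    have hnone : G'.neighborSet none = {some a, some v} := by
      ext x
      cases x with
      | none => simp [hG', dupGraph_adj, dupAdj]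
      | some u => simp [hG', dupGraph_adj, dupAdj, or_comm]
    have hsv : G'.neighborSet (some v) = {none} := by
      ext x
      cases x with
      | none => simp [hG', dupGraph_adj, dupAdj]
      | some u =>
        simp only [hG', SimpleGraph.mem_neighborSet, dupGraph_adj, dupAdj,
          Set.mem_singleton_iff, Set.mem_setOf_eq, Set.mem_empty_iff_false]
        constructor
        · rintro ⟨hne, h | h⟩ <;>
            rcases h with ⟨h1, h2, h3⟩ | ⟨h1, h2⟩ | ⟨h1, h2⟩ <;> simp_all
        · intro h; simp at h
    have hkey : ∀ u : V, u ≠ v →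
        (G'.neighborSet (some u)).ncard = (G.neighborSet u).ncard := by
      intro u huv
      by_cases hua : u = a
      · subst hua
        have heq : G'.neighborSet (some u) =
            insert none (some '' (G.neighborSet u \ {v})) := by
          ext x
          cases x with
          | none => simp [hG', dupGraph_adj, dupAdj]
          | some w =>
            simp only [hG', SimpleGraph.mem_neighborSet, dupGraph_adj, dupAdj,
              Set.mem_insert_iff, Set.mem_image, Set.mem_diff, Set.mem_singleton_iff,
              Option.some.injEq, exists_eq_right, reduceCtorEq, false_or,
              Set.mem_empty_iff_false]
            constructor
            · rintro ⟨hne, h | h⟩ <;>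
                rcases h with ⟨h1, h2, h3⟩ | ⟨h1, h2⟩ | ⟨h1, h2⟩ <;> simp_all [G.adj_symm]
            · rintro ⟨h, hwv⟩
              exact ⟨by simpa using (G.ne_of_adj h), Or.inl (Or.inl ⟨huv, hwv, h⟩)⟩
        have hvmem : v ∈ G.neighborSet u := G.adj_symm hva
        rw [heq, Set.ncard_insert_of_notMem (by simp),
          Set.ncard_image_of_injective _ (Option.some_injective V),
          Set.ncard_diff_singleton_add_one hvmem]
      · have hvnu : v ∉ G.neighborSet u := by
          intro h
          have : u ∈ G.neighborSet v := G.adj_symm h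
          rw [hN] at this
          simp_all
        have : G'.neighborSet (some u) = some '' G.neighborSet u := by
          ext x
          cases x with
          | none => simp [hG', dupGraph_adj, dupAdj, huv, hua]
          | some w =>
            simp only [hG', SimpleGraph.mem_neighborSet, dupGraph_adj, dupAdj,
              Set.mem_image, Set.mem_singleton_iff, Option.some.injEq, exists_eq_right,
              Set.mem_empty_iff_false]
            constructor
            · rintro ⟨hne, h | h⟩ <;>
                rcases h with ⟨h1, h2, h3⟩ | ⟨h1, h2⟩ | ⟨h1, h2⟩ <;> simp_all [G.adj_symm]
            · intro h
              have hwv : w ≠ v := by rintro rfl; exact hvnu h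
              exact ⟨by simpa using (G.ne_of_adj h), Or.inl (Or.inl ⟨huv, hwv, h⟩)⟩
        rw [this, Set.ncard_image_of_injective _ (Option.some_injective V)]
    have hdegv : (G.neighborSet v).ncard = 1 := by rw [hN, Set.ncard_singleton]
    have hdnone : (G'.neighborSet none).ncard = 2 := by
      rw [hnone, Set.ncard_pair (by simp [hav])]
    have hdsv : (G'.neighborSet (some v)).ncard = 1 := by
      rw [hsv, Set.ncard_singleton]
    refine ⟨?_, ?_, ?_⟩
    · have hadjvn : G'.Adj (some v) none := by
        rw [hG', dupGraph_adj]
        exact ⟨by simp, Or.inl (Or.inr ⟨rfl, trivial⟩)⟩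
      have hadjna : G'.Adj none (some a) := by
        rw [hG', dupGraph_adj]
        exact ⟨by simp, Or.inl (Or.inl rfl)⟩
      have hlift : ∀ u w, G.Adj u w → G'.Reachable (some u) (some w) := by
        have base : ∀ w, G.Adj v w → G'.Reachable (some v) (some w) := by
          intro w hw
          have : w ∈ G.neighborSet v := hw
          rw [hN] at this
          simp only [Set.mem_singleton_iff] at this
          subst this
          exact hadjvn.reachable.trans hadjna.reachable
        intro u w huw
        by_cases huv : u = v
        · subst huv; exact base w huw
        by_cases hwv : w = v
        · subst hwv; exact (base u huw.symm).symm
        · refine SimpleGraph.Adj.reachable ?_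
          rw [hG', dupGraph_adj]
          exact ⟨by simpa using (G.ne_of_adj huw), Or.inl (Or.inl ⟨huv, hwv, huw⟩)⟩
      have key : ∀ x : Option V, G'.Reachable x (some v) := by
        intro x
        cases x with
        | none => exact hadjvn.reachable.symm
        | some u => exact reach_lift hlift (hG.preconnected u v)
      have : Nonempty (Option V) := ⟨none⟩
      exact SimpleGraph.Connected.mk (fun x y => (key x).trans (key y).symm)
    · have : {w : Option V | (G'.neighborSet w).ncard = 1} =
          some '' {u : V | (G.neighborSet u).ncard = 1} := by
        ext w
        cases w with
        | none =>
          simp only [Set.mem_setOf_eq, hdnone]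
          simp
        | some u =>
          simp only [Set.mem_setOf_eq, Set.mem_image, Option.some.injEq, exists_eq_right]
          by_cases huv : u = v
          · subst huv; simp [hdsv, hdegv]
          · rw [hkey u huv]
      rw [this, Set.ncard_image_of_injective _ (Option.some_injective V), hends]
    · intro w
      cases w with
      | none => exact Or.inr hdnone
      | some u =>
        by_cases huv : u = v
        · subst huv; exact Or.inl hdsv
        · rw [hkey u huv]; exact hdeg u
end

section
/- Let G be a simple graph on a finite vertex set V that is a tree (connected and acyclic), let v ∈ V, and let Λ₁, Λ₂ be a partition of N_G(v). Form the simple graph G' on Option V (where `some u` keeps the old vertices, `some v` is the first child, and `none` is the second child) whose edges are: all edges of G not incident to v, an edge from the first child to each vertex of Λ₁, an edge from the second child to each vertex of Λ₂, and an edge between the two children. Then G' is a tree. -/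
namespace DupAux

open SimpleGraph

/-- projection collapsing the two children back onto the parent -/
def pr {V : Type*} (v : V) : Option V → V := fun o => o.getD v

variable {V : Type*} {G : SimpleGraph V} {v : V} {Λ₁ Λ₂ : Set V}

lemma adj_ss (h1 : Λ₁ ⊆ G.neighborSet v) {a b : V} :
    (dupGraph G v Λ₁ Λ₂ True).Adj (some a) (some b) ↔
      (a ≠ v ∧ b ≠ v ∧ G.Adj a b) ∨ (a = v ∧ b ∈ Λ₁) ∨ (b = v ∧ a ∈ Λ₁) := by
  simp only [dupGraph, SimpleGraph.fromRel_adj, dupAdj, ne_eq, Option.some.injEq]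
  constructor
  · rintro ⟨hne, h | h⟩
    · exact h
    · rcases h with ⟨ha, hb, hadj⟩ | ⟨hb, ha⟩ | ⟨ha, hb⟩
      · exact Or.inl ⟨hb, ha, hadj.symm⟩
      · exact Or.inr (Or.inr ⟨hb, ha⟩)
      · exact Or.inr (Or.inl ⟨ha, hb⟩)
  · intro h
    refine ⟨?_, Or.inl h⟩
    rcases h with ⟨ha, hb, hadj⟩ | ⟨ha, hb⟩ | ⟨hb, ha⟩
    · exact hadj.ne
    · subst ha; exact fun hh => (G.adj_comm _ _ |>.mp (h1 hb)).ne hh.symm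
    · subst hb; exact fun hh => (G.adj_comm _ _ |>.mp (h1 ha)).ne hh

lemma adj_sn {a : V} : (dupGraph G v Λ₁ Λ₂ True).Adj (some a) none ↔ a ∈ Λ₂ ∨ a = v := by
  simp only [dupGraph, SimpleGraph.fromRel_adj, dupAdj, and_true]
  constructor
  · rintro ⟨-, h | h⟩ <;> exact h
  · intro h; exact ⟨by simp, Or.inl h⟩

/-- an edge of the duplicated graph whose endpoints project equally must be the
special edge between the two children -/
lemma eq_special {x y : Option V} (hxy : (dupGraph G v Λ₁ Λ₂ True).Adj x y)
    (h : pr v x = pr v y) : s(x, y) = s(some v, none) := by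
  cases x <;> cases y
  · exact absurd rfl hxy.ne
  · simp only [pr, Option.getD] at h
    rw [← h, Sym2.eq_swap]
  · simp only [pr, Option.getD] at h
    rw [h]
  · simp only [pr, Option.getD] at h
    exact absurd (congrArg some h) hxy.ne

lemma edge_lift (h1 : Λ₁ ⊆ G.neighborSet v) (h2 : Λ₂ ⊆ G.neighborSet v)
    {x y : Option V} (hxy : (dupGraph G v Λ₁ Λ₂ True).Adj x y) (h : pr v x ≠ pr v y) :
    G.Adj (pr v x) (pr v y) := by
  cases x <;> cases y <;> simp only [pr, Option.getD] at h ⊢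
  · exact absurd rfl hxy.ne
  · rcases (adj_sn.mp hxy.symm) with hb | hb
    · exact (G.mem_neighborSet _ _).mp (h2 hb)
    · exact absurd hb.symm h
  · rcases (adj_sn.mp hxy) with hb | hb
    · exact ((G.mem_neighborSet _ _).mp (h2 hb)).symm
    · exact absurd hb h
  · rcases (adj_ss h1).mp hxy with ⟨_, _, hadj⟩ | ⟨ha, hb⟩ | ⟨hb, ha⟩
    · exact hadj
    · simpa [pr, ha] using h1 hb
    · simpa [pr, hb] using (h1 ha).symm

open Classical in
/-- project a walk of the duplicated graph down to the original graph,
skipping the special edge -/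
noncomputable def projWalk (h1 : Λ₁ ⊆ G.neighborSet v) (h2 : Λ₂ ⊆ G.neighborSet v) :
    ∀ {x y : Option V}, (dupGraph G v Λ₁ Λ₂ True).Walk x y → G.Walk (pr v x) (pr v y)
  | _, _, .nil => .nil
  | x, _, .cons (v := z) hadj p =>
    if h : pr v x = pr v z then (projWalk h1 h2 p).copy h.symm rfl
    else .cons (edge_lift h1 h2 hadj h) (projWalk h1 h2 p)

lemma proj_edges_sub (h1 : Λ₁ ⊆ G.neighborSet v) (h2 : Λ₂ ⊆ G.neighborSet v) :
    ∀ {x y : Option V} (p : (dupGraph G v Λ₁ Λ₂ True).Walk x y),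
      ∀ f ∈ (projWalk h1 h2 p).edges, ∃ g ∈ p.edges, f = Sym2.map (pr v) g := by
  intro x y p
  induction p with
  | nil => simp [projWalk]
  | cons hadj p ih =>
    rw [projWalk]
    split_ifs with h
    · intro f hf
      rw [Walk.edges_copy] at hf
      obtain ⟨g, hg, rfl⟩ := ih f hf
      exact ⟨g, by rw [Walk.edges_cons]; exact List.mem_cons_of_mem _ hg, rfl⟩
    · intro f hf
      rw [Walk.edges_cons, List.mem_cons] at hf
      rcases hf with rfl | hf
      · exact ⟨s(_, _), by rw [Walk.edges_cons]; exact List.mem_cons_self,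
          (Sym2.map_pair_eq _ _ _).symm⟩
      · obtain ⟨g, hg, rfl⟩ := ih f hf
        exact ⟨g, by rw [Walk.edges_cons]; exact List.mem_cons_of_mem _ hg, rfl⟩

lemma proj_edges_eq (h1 : Λ₁ ⊆ G.neighborSet v) (h2 : Λ₂ ⊆ G.neighborSet v) :
    ∀ {x y : Option V} (p : (dupGraph G v Λ₁ Λ₂ True).Walk x y),
      s(some v, none) ∉ p.edges →
      (projWalk h1 h2 p).edges = p.edges.map (Sym2.map (pr v)) ∧
      (projWalk h1 h2 p).support = p.support.map (pr v) := by
  intro x y p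
  induction p with
  | nil => simp [projWalk]
  | cons hadj p ih =>
    intro hsp
    rw [Walk.edges_cons, List.mem_cons, not_or] at hsp
    rw [projWalk]
    split_ifs with h
    · exact absurd (eq_special hadj h).symm hsp.1
    · obtain ⟨he, hs⟩ := ih hsp.2
      refine ⟨?_, ?_⟩
      · simp [Walk.edges_cons, he, Sym2.map_pair_eq]
      · simp [Walk.support_cons, hs]

lemma pr_eq_v {x : Option V} (h : pr v x = v) : x = some v ∨ x = none := by
  cases x
  · exact Or.inr rfl
  · exact Or.inl (congrArg some h)

lemma pr_ne_v {x : Option V} (h : pr v x ≠ v) : x = some (pr v x) := by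
  cases x
  · exact absurd rfl h
  · rfl

/-- two non-special edges with a common endpoint `b ≠ v` whose other endpoints both
project to `v` coincide -/
lemma det (h1 : Λ₁ ⊆ G.neighborSet v) (hdisj : Λ₁ ∩ Λ₂ = ∅) {x x' : Option V} {b : V}
    (hb : b ≠ v) (hx : pr v x = v) (hx' : pr v x' = v)
    (h : (dupGraph G v Λ₁ Λ₂ True).Adj x (some b))
    (h' : (dupGraph G v Λ₁ Λ₂ True).Adj x' (some b)) : x = x' := by
  have key : ∀ {y : Option V}, pr v y = v → (dupGraph G v Λ₁ Λ₂ True).Adj y (some b) →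
      (y = some v ∧ b ∈ Λ₁) ∨ (y = none ∧ b ∈ Λ₂) := by
    intro y hy hadj
    rcases pr_eq_v hy with rfl | rfl
    · rcases (adj_ss h1).mp hadj with ⟨hv, _, _⟩ | ⟨_, hmem⟩ | ⟨hbv, _⟩
      · exact absurd rfl hv
      · exact Or.inl ⟨rfl, hmem⟩
      · exact absurd hbv hb
    · rcases adj_sn.mp hadj.symm with hmem | hbv
      · exact Or.inr ⟨rfl, hmem⟩
      · exact absurd hbv hb
  rcases key hx h with ⟨rfl, hm⟩ | ⟨rfl, hm⟩ <;>
    rcases key hx' h' with ⟨rfl, hm'⟩ | ⟨rfl, hm'⟩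
  · rfl
  · exact absurd (Set.mem_inter hm hm') (by rw [hdisj]; exact id)
  · exact absurd (Set.mem_inter hm' hm) (by rw [hdisj]; exact id)
  · rfl

lemma aligned (h1 : Λ₁ ⊆ G.neighborSet v) (hdisj : Λ₁ ∩ Λ₂ = ∅) {x y x' y' : Option V}
    (hxy : (dupGraph G v Λ₁ Λ₂ True).Adj x y)
    (hxy' : (dupGraph G v Λ₁ Λ₂ True).Adj x' y')
    (ns : s(x, y) ≠ s(some v, none)) (_ns' : s(x', y') ≠ s(some v, none))
    (ha : pr v x = pr v x') (hb : pr v y = pr v y') : x = x' ∧ y = y' := by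
  by_cases hv : pr v x = v
  · have hyv : pr v y ≠ v := fun hyv => ns (eq_special hxy (hv.trans hyv.symm))
    have hy : y = some (pr v y) := pr_ne_v hyv
    have hy' : y' = some (pr v y) := by rw [hb] at hyv ⊢; exact pr_ne_v hyv
    refine ⟨?_, hy.trans hy'.symm⟩
    exact det h1 hdisj hyv hv (ha ▸ hv) (hy ▸ hxy) (hy' ▸ hxy')
  · have hx : x = some (pr v x) := pr_ne_v hv
    have hx' : x' = some (pr v x) := by rw [ha] at hv ⊢; exact pr_ne_v hv
    refine ⟨hx.trans hx'.symm, ?_⟩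
    by_cases hyv : pr v y = v
    · have hxvne : pr v x ≠ v := hv
      exact det h1 hdisj hxvne hyv (hb ▸ hyv) (hx ▸ hxy.symm) (hx' ▸ hxy'.symm)
    · have hy : y = some (pr v y) := pr_ne_v hyv
      have hy' : y' = some (pr v y) := by rw [hb] at hyv ⊢; exact pr_ne_v hyv
      exact hy.trans hy'.symm

/-- projection is injective on non-special edges of the duplicated graph -/
lemma edge_inj (h1 : Λ₁ ⊆ G.neighborSet v) (hdisj : Λ₁ ∩ Λ₂ = ∅) {e1 e2 : Sym2 (Option V)}
    (he1 : e1 ∈ (dupGraph G v Λ₁ Λ₂ True).edgeSet)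
    (he2 : e2 ∈ (dupGraph G v Λ₁ Λ₂ True).edgeSet)
    (ns1 : e1 ≠ s(some v, none)) (ns2 : e2 ≠ s(some v, none))
    (heq : Sym2.map (pr v) e1 = Sym2.map (pr v) e2) : e1 = e2 := by
  induction e1 with
  | _ x y =>
  induction e2 with
  | _ x' y' =>
  rw [SimpleGraph.mem_edgeSet] at he1 he2
  rw [Sym2.map_pair_eq, Sym2.map_pair_eq, Sym2.eq_iff] at heq
  rcases heq with ⟨ha, hb⟩ | ⟨ha, hb⟩
  · obtain ⟨rfl, rfl⟩ := aligned h1 hdisj he1 he2 ns1 ns2 ha hb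
    rfl
  · have ns2' : s(y', x') ≠ s(some v, none) := by rwa [Sym2.eq_swap]
    obtain ⟨rfl, rfl⟩ := aligned h1 hdisj he1 he2.symm ns1 ns2' ha hb
    exact Sym2.eq_swap

lemma adj_reach (h1 : Λ₁ ⊆ G.neighborSet v) (hunion : Λ₁ ∪ Λ₂ = G.neighborSet v)
    {a b : V} (hadj : G.Adj a b) :
    (dupGraph G v Λ₁ Λ₂ True).Reachable (some a) (some b) := by
  have lift : ∀ {c : V}, G.Adj v c →
      (dupGraph G v Λ₁ Λ₂ True).Reachable (some v) (some c) := by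
    intro c hc
    have hmem : c ∈ Λ₁ ∪ Λ₂ := by rw [hunion]; exact hc
    rcases hmem with hm | hm
    · exact ((adj_ss h1).mpr (Or.inr (Or.inl ⟨rfl, hm⟩))).reachable
    · have e1 : (dupGraph G v Λ₁ Λ₂ True).Adj (some c) none := adj_sn.mpr (Or.inl hm)
      have e2 : (dupGraph G v Λ₁ Λ₂ True).Adj (some v) none := adj_sn.mpr (Or.inr rfl)
      exact e2.reachable.trans e1.reachable.symm
  by_cases hav : a = v
  · subst hav; exact lift hadj
  by_cases hbv : b = v
  · subst hbv; exact (lift hadj.symm).symm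
  · exact ((adj_ss h1).mpr (Or.inl ⟨hav, hbv, hadj⟩)).reachable

lemma walk_reach (h1 : Λ₁ ⊆ G.neighborSet v) (hunion : Λ₁ ∪ Λ₂ = G.neighborSet v)
    {a b : V} (w : G.Walk a b) :
    (dupGraph G v Λ₁ Λ₂ True).Reachable (some a) (some b) := by
  induction w with
  | nil => exact Reachable.refl _
  | cons hadj p ih => exact (adj_reach h1 hunion hadj).trans ih

lemma dup_connected (h1 : Λ₁ ⊆ G.neighborSet v) (hG : G.Connected)
    (hunion : Λ₁ ∪ Λ₂ = G.neighborSet v) : (dupGraph G v Λ₁ Λ₂ True).Connected := by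
  have key : ∀ z : Option V, (dupGraph G v Λ₁ Λ₂ True).Reachable z (some v) := by
    intro z
    cases z with
    | none => exact (adj_sn.mpr (Or.inr rfl)).reachable.symm
    | some u =>
      obtain ⟨w⟩ := hG.preconnected u v
      exact walk_reach h1 hunion w
  rw [connected_iff]
  exact ⟨fun x y => (key x).trans (key y).symm, ⟨none⟩⟩

lemma no_special_path (h1 : Λ₁ ⊆ G.neighborSet v) (h2 : Λ₂ ⊆ G.neighborSet v)
    (hdisj : Λ₁ ∩ Λ₂ = ∅) (hac : G.IsAcyclic)
    (w : (dupGraph G v Λ₁ Λ₂ True).Walk (some v) none)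
    (hw : s(some v, none) ∉ w.edges) : False := by
  classical
  have hp : w.bypass.IsPath := Walk.bypass_isPath w
  have hspp : s(some v, none) ∉ w.bypass.edges := fun h => hw (Walk.edges_bypass_subset w h)
  obtain ⟨he, hs⟩ := proj_edges_eq h1 h2 w.bypass hspp
  have hq : ((projWalk h1 h2 w.bypass).copy rfl rfl : G.Walk v v).edges =
      (projWalk h1 h2 w.bypass).edges := Walk.edges_copy _ rfl rfl
  have hq2 : ((projWalk h1 h2 w.bypass).copy rfl rfl : G.Walk v v).support =
      (projWalk h1 h2 w.bypass).support := Walk.support_copy _ rfl rfl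
  refine hac ((projWalk h1 h2 w.bypass).copy rfl rfl : G.Walk v v) ⟨⟨?_, ?_⟩, ?_⟩
  · -- trail
    constructor
    rw [hq, he]
    refine List.Nodup.map_on ?_ hp.edges_nodup
    intro a ha b hb hab
    exact edge_inj h1 hdisj (w.bypass.edges_subset_edgeSet ha)
      (w.bypass.edges_subset_edgeSet hb) (fun h => hspp (h ▸ ha)) (fun h => hspp (h ▸ hb))
      hab
  · -- nonempty
    intro hnil
    have hlen : ((projWalk h1 h2 w.bypass).copy rfl rfl : G.Walk v v).edges = [] := by
      rw [hnil]; rfl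
    rw [hq, he] at hlen
    have : w.bypass.length = 0 := by
      have h0 := congrArg List.length hlen
      rw [List.length_map, Walk.length_edges] at h0
      exact h0
    exact Option.some_ne_none v (Walk.eq_of_length_eq_zero this)
  · -- support tail nodup
    rw [hq2, hs, Walk.support_eq_cons, List.map_cons, List.tail_cons]
    have hnd := hp.support_nodup
    rw [Walk.support_eq_cons, List.nodup_cons] at hnd
    refine List.Nodup.map_on ?_ hnd.2
    intro a ha b hb hab
    have hav : a ≠ some v := fun h => hnd.1 (h ▸ ha)
    have hbv : b ≠ some v := fun h => hnd.1 (h ▸ hb)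
    cases a <;> cases b <;> simp only [pr, Option.getD] at hab
    · rfl
    · exact absurd (congrArg some hab.symm) hbv
    · exact absurd (congrArg some hab) hav
    · exact congrArg some hab

lemma no_edge_path (h1 : Λ₁ ⊆ G.neighborSet v) (h2 : Λ₂ ⊆ G.neighborSet v)
    (hdisj : Λ₁ ∩ Λ₂ = ∅) (hac : G.IsAcyclic) {x y : Option V}
    (hxy : (dupGraph G v Λ₁ Λ₂ True).Adj x y) (hsp : s(x, y) ≠ s(some v, none))
    (w : (dupGraph G v Λ₁ Λ₂ True).Walk x y) (hw : s(x, y) ∉ w.edges) : False := by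
  have hpr : pr v x ≠ pr v y := fun h => hsp (eq_special hxy h)
  have hadjG : G.Adj (pr v x) (pr v y) := edge_lift h1 h2 hxy hpr
  have hbr := (isAcyclic_iff_forall_adj_isBridge.mp hac) hadjG
  rw [isBridge_iff] at hbr
  refine hbr ?_
  rw [reachable_delete_edges_iff_exists_walk]
  refine ⟨projWalk h1 h2 w, fun hf => ?_⟩
  obtain ⟨g, hg, hfeq⟩ := proj_edges_sub h1 h2 w _ hf
  by_cases hgs : g = s(some v, none)
  · subst hgs
    rw [Sym2.map_pair_eq, Sym2.eq_iff] at hfeq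
    simp only [pr, Option.getD] at hfeq
    rcases hfeq with ⟨hxx, hyy⟩ | ⟨hxx, hyy⟩ <;> exact hpr (hxx.trans hyy.symm)
  · have := edge_inj h1 hdisj ((dupGraph G v Λ₁ Λ₂ True).mem_edgeSet.mpr hxy)
      (w.edges_subset_edgeSet hg) hsp hgs
      (by rw [Sym2.map_pair_eq, ← hfeq])
    exact hw (this ▸ hg)

end DupAux

open SimpleGraph DupAux in
/-- trees are invariant under the duplication rule which
partitions the parent's connections between the two children and connects the
two children to each other. -/
theorem tree_invariant_under_duplication {V : Type*} [Fintype V]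
    (G : SimpleGraph V) (hG : G.IsTree) (v : V) (Λ₁ Λ₂ : Set V)
    (h1 : Λ₁ ⊆ G.neighborSet v) (h2 : Λ₂ ⊆ G.neighborSet v)
    (hunion : Λ₁ ∪ Λ₂ = G.neighborSet v) (hdisj : Λ₁ ∩ Λ₂ = ∅) :
    (dupGraph G v Λ₁ Λ₂ True).IsTree := by
  constructor
  · exact dup_connected h1 hG.isConnected hunion
  · have hac := hG.IsAcyclic
    rw [isAcyclic_iff_forall_adj_isBridge]
    intro x y hxy
    rw [isBridge_iff]
    refine fun hr => ?_
    rw [reachable_delete_edges_iff_exists_walk] at hr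
    obtain ⟨w, hw⟩ := hr
    by_cases hsp : s(x, y) = s(some v, none)
    · rw [Sym2.eq_iff] at hsp
      rcases hsp with ⟨rfl, rfl⟩ | ⟨rfl, rfl⟩
      · exact no_special_path h1 h2 hdisj hac w hw
      · refine no_special_path h1 h2 hdisj hac w.reverse ?_
        rw [Walk.edges_reverse, List.mem_reverse, Sym2.eq_swap]
        exact hw
    · exact no_edge_path h1 h2 hdisj hac hxy hsp w hw
end
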